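/- arXiv:1710.07196 — 3 statements merged into one kernel-verified Lean document; each statement's English description precedes it below -/
import Mathlib

section
/- For real p, q ≥ 0, Re(c) > Re(b) > 0, and all complex z, the (p,q)-confluent hypergeometric function satisfies the integral representation Φ_{p,q}(b;c;z) = (1/B(b,c−b)) ∫₀¹ t^{b−1} (1−t)^{c−b−1} exp(zt − p/t − q/(1−t)) dt. -/
/-!
Expand `exp (z t) = ∑ (z t)ⁿ / n!` under the integral: since `t^(b-1) tⁿ = t^(b+n-1)`, the `n`-th
term is `B_{p,q}(b+n, c-b) zⁿ / n!`. Termwise integration is legitimate because, for `p, q ≥ 0`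
and `0 < t < 1`, the factor `exp (-p/t - q/(1-t))` has modulus at most `1`, so the `n`-th term is
dominated by `|z|ⁿ / n!` times the integrable classical beta integrand.
-/

open MeasureTheory

/-- The (p,q)-extended beta function. -/
noncomputable def extBeta (p q x y : ℂ) : ℂ :=
  ∫ t in (0:ℝ)..1, (t:ℂ) ^ (x - 1) * ((1:ℂ) - t) ^ (y - 1) *
    Complex.exp (-p / t - q / (1 - t))

/-- The (p,q)-confluent hypergeometric function, defined by its series. -/
noncomputable def Phi (p q b c z : ℂ) : ℂ :=
  ∑' n : ℕ, extBeta p q (b + n) (c - b) / Complex.betaIntegral b (c - b) * z ^ n / n.factorial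

open Set

theorem hasSum_integral_mul_pow_div_factorial {α : Type*} [MeasurableSpace α] {μ : Measure α}
    {f g : α → ℂ} {R : ℝ} (hf : Integrable f μ) (hg : AEStronglyMeasurable g μ)
    (hgR : ∀ᵐ t ∂μ, ‖g t‖ ≤ R) :
    HasSum (fun n : ℕ => ∫ t, f t * (g t ^ n / n.factorial) ∂μ)
      (∫ t, f t * Complex.exp (g t) ∂μ) := by
  have hbound : ∀ n : ℕ, ∀ᵐ t ∂μ, ‖g t ^ n / n.factorial‖ ≤ R ^ n / n.factorial := fun n => by
    filter_upwards [hgR] with t ht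
    rw [norm_div, norm_pow, Complex.norm_natCast]
    gcongr
  have hint : ∀ n : ℕ, Integrable (fun t => f t * (g t ^ n / n.factorial)) μ := fun n =>
    hf.mul_bdd (by fun_prop) (hbound n)
  have hnorm : ∀ n : ℕ, ∫ t, ‖f t * (g t ^ n / n.factorial)‖ ∂μ ≤
      (∫ t, ‖f t‖ ∂μ) * (R ^ n / n.factorial) := fun n => by
    rw [← integral_mul_const]
    refine integral_mono_ae (hint n).norm (hf.norm.mul_const _) ?_
    filter_upwards [hbound n] with t ht
    rw [norm_mul]
    gcongr
  have hsum : Summable fun n : ℕ => ∫ t, ‖f t * (g t ^ n / n.factorial)‖ ∂μ :=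
    .of_nonneg_of_le (fun n => integral_nonneg fun t => norm_nonneg _) hnorm
      ((Real.summable_pow_div_factorial R).mul_left _)
  have hexp : ∀ t, f t * Complex.exp (g t) = ∑' n : ℕ, f t * (g t ^ n / n.factorial) :=
      fun t => by
    rw [Complex.exp_eq_exp_ℂ, NormedSpace.exp_eq_tsum_div, tsum_mul_left]
  simp_rw [hexp]
  exact hasSum_integral_of_summable_integral_norm hint hsum

noncomputable def extBetaKernel (p q x y : ℂ) (t : ℝ) : ℂ :=
  (t:ℂ) ^ (x - 1) * ((1:ℂ) - t) ^ (y - 1) * Complex.exp (-p / t - q / (1 - t))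

theorem extBeta_eq_integral_Ioo (p q x y : ℂ) :
    extBeta p q x y = ∫ t in Ioo 0 1, extBetaKernel p q x y t := by
  rw [extBeta, intervalIntegral.integral_of_le zero_le_one, integral_Ioc_eq_integral_Ioo]
  rfl

theorem extBetaKernel_add_nat (p q x y : ℂ) (n : ℕ) {t : ℝ} (ht : 0 < t) :
    extBetaKernel p q (x + n) y t = extBetaKernel p q x y t * (t : ℂ) ^ n := by
  have ht0 : (t : ℂ) ≠ 0 := Complex.ofReal_ne_zero.mpr ht.ne'
  rw [extBetaKernel, extBetaKernel, add_sub_right_comm, Complex.cpow_add _ _ ht0,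
    Complex.cpow_natCast]
  ring

theorem norm_exp_neg_div_sub_div_le_one {p q : ℝ} (hp : 0 ≤ p) (hq : 0 ≤ q) {t : ℝ}
    (ht : t ∈ Ioo (0 : ℝ) 1) : ‖Complex.exp (-(p : ℂ) / t - q / (1 - t))‖ ≤ 1 := by
  have h1 : 0 ≤ p / t := div_nonneg hp ht.1.le
  have h2 : 0 ≤ q / (1 - t) := div_nonneg hq (sub_nonneg.mpr ht.2.le)
  have hreal : -(p : ℂ) / t - q / (1 - t) = ((-(p / t) - q / (1 - t) : ℝ) : ℂ) := by
    push_cast; ring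
  rw [hreal, Complex.norm_exp_ofReal, Real.exp_le_one_iff]
  linarith

theorem integrableOn_extBetaKernel {p q : ℝ} (hp : 0 ≤ p) (hq : 0 ≤ q) {x y : ℂ}
    (hx : 0 < x.re) (hy : 0 < y.re) :
    IntegrableOn (extBetaKernel p q x y) (Ioo 0 1) := by
  have hbeta :
      IntegrableOn (fun t : ℝ => (t : ℂ) ^ (x - 1) * (1 - (t : ℂ)) ^ (y - 1)) (Ioo 0 1) :=
    (Complex.betaIntegral_convergent hx hy).1.mono_set Ioo_subset_Ioc_self
  have hcont :
      ContinuousOn (fun t : ℝ => Complex.exp (-(p : ℂ) / t - q / (1 - t))) (Ioo 0 1) := by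
    refine Complex.continuous_exp.comp_continuousOn (ContinuousOn.sub ?_ ?_) <;>
      refine continuousOn_const.div (by fun_prop) fun t ht => ?_
    · exact Complex.ofReal_ne_zero.mpr ht.1.ne'
    · exact_mod_cast (sub_pos.mpr ht.2).ne'
  exact hbeta.mul_bdd (hcont.aestronglyMeasurable measurableSet_Ioo)
    ((ae_restrict_iff' measurableSet_Ioo).mpr <|
      ae_of_all _ fun t ht => norm_exp_neg_div_sub_div_le_one hp hq ht)

theorem extBeta_add_nat_mul_pow_div_factorial (p q x y z : ℂ) (n : ℕ) :
    extBeta p q (x + n) y * (z ^ n / n.factorial) =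
      ∫ t in Ioo 0 1, extBetaKernel p q x y t * ((z * t) ^ n / n.factorial) := by
  rw [extBeta_eq_integral_Ioo, ← integral_mul_const]
  refine setIntegral_congr_fun measurableSet_Ioo fun t ht => ?_
  rw [extBetaKernel_add_nat _ _ _ _ _ ht.1, mul_pow]
  ring

theorem Phi_integral_rep (p q : ℝ) (hp : 0 ≤ p) (hq : 0 ≤ q) (b c : ℂ)
    (hb : 0 < b.re) (hcb : b.re < c.re) (z : ℂ) :
    Phi p q b c z = (Complex.betaIntegral b (c - b))⁻¹ *
      ∫ t in (0:ℝ)..1, (t:ℂ) ^ (b - 1) * ((1:ℂ) - t) ^ (c - b - 1) *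
        Complex.exp (z * t - p / t - q / (1 - t)) := by
  have hcb' : 0 < (c - b).re := by rw [Complex.sub_re]; linarith
  have hzt : ∀ᵐ t : ℝ ∂volume.restrict (Ioo 0 1), ‖z * t‖ ≤ ‖z‖ := by
    refine (ae_restrict_iff' measurableSet_Ioo).mpr <| ae_of_all _ fun t ht => ?_
    rw [norm_mul, Complex.norm_real, Real.norm_of_nonneg ht.1.le]
    exact mul_le_of_le_one_right (norm_nonneg z) ht.2.le
  have hseries := (hasSum_integral_mul_pow_div_factorial
    (integrableOn_extBetaKernel hp hq hb hcb') (g := fun t : ℝ => z * t) (by fun_prop) hzt).mul_left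
    (Complex.betaIntegral b (c - b))⁻¹
  have hintegrand : ∀ t : ℝ, extBetaKernel p q b (c - b) t * Complex.exp (z * t) =
      (t:ℂ) ^ (b - 1) * ((1:ℂ) - t) ^ (c - b - 1) *
        Complex.exp (z * t - p / t - q / (1 - t)) := by
    intro t
    rw [extBetaKernel, mul_assoc, ← Complex.exp_add]
    congr 2
    ring
  simp_rw [hintegrand, ← extBeta_add_nat_mul_pow_div_factorial] at hseries
  rw [intervalIntegral.integral_of_le zero_le_one, integral_Ioc_eq_integral_Ioo,
    ← hseries.tsum_eq, Phi]
  congr 1 with n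
  ring
end

section
/- Let p, q ≥ 0 be real, b, c complex with Re(c) > Re(b) > 0, and n a natural number. Then the n-th derivative of the (p,q)-confluent hypergeometric function in z satisfies dⁿ/dzⁿ [Φ_{p,q}(b; c; z)] = ((b)_n / (c)_n) · Φ_{p,q}(b+n; c+n; z), where (x)_n denotes the Pochhammer symbol. -/
open MeasureTheory

/-- The Pochhammer symbol (x)_n. -/
noncomputable def poch (x : ℂ) (n : ℕ) : ℂ := (ascPochhammer ℂ n).eval x

lemma ne_zero_of_re_pos' {x : ℂ} (h : 0 < x.re) : x ≠ 0 := fun h0 => by simp [h0] at h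

lemma poch_ne_zero {x : ℂ} (hx : 0 < x.re) (n : ℕ) : poch x n ≠ 0 := by
  induction n with
  | zero => simp [poch]
  | succ n ih =>
    simp only [poch, ascPochhammer_succ_eval] at ih ⊢
    refine mul_ne_zero ih (ne_zero_of_re_pos' ?_)
    simp only [Complex.add_re, Complex.natCast_re]
    positivity

/-- Uniform bound for the extended beta values appearing as series coefficients. -/
lemma extBeta_norm_le (p q : ℝ) (hp : 0 ≤ p) (hq : 0 ≤ q) (b c : ℂ)
    (hb : 0 < b.re) (hcb : b.re < c.re) (n : ℕ) :
    ‖extBeta p q (b + n) (c - b)‖ ≤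
      |∫ t in (0:ℝ)..1, ‖(t:ℂ) ^ (b - 1) * ((1:ℂ) - t) ^ (c - b - 1)‖| := by
  have h2 : 0 < (c - b).re := by simp [Complex.sub_re]; linarith
  apply intervalIntegral.norm_integral_le_abs_of_norm_le
  · have hIoo : ∀ᵐ (t : ℝ) ∂(volume.restrict (Set.uIoc (0:ℝ) 1)), t ∈ Set.Ioo (0:ℝ) 1 := by
      rw [Set.uIoc_of_le zero_le_one]
      have h1 : ∀ᵐ (t : ℝ) ∂(volume.restrict (Set.Ioc (0:ℝ) 1)), t ∈ Set.Ioc (0:ℝ) 1 :=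
        ae_restrict_mem measurableSet_Ioc
      have hne : ∀ᵐ (t : ℝ) ∂(volume.restrict (Set.Ioc (0:ℝ) 1)), t ≠ 1 := by
        refine ae_restrict_of_ae ?_
        rw [ae_iff]
        have : {t : ℝ | ¬ t ≠ 1} = {1} := by ext t; simp
        rw [this]
        exact Real.volume_singleton
      filter_upwards [h1, hne] with t ht hne'
      exact ⟨ht.1, lt_of_le_of_ne ht.2 hne'⟩
    filter_upwards [hIoo] with t ht
    have ht0 : (0:ℝ) < t := ht.1
    have ht1 : t < 1 := ht.2
    have ht1' : (0:ℝ) < 1 - t := by linarith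
    have e1 : ((1:ℂ) - t) = ((1 - t : ℝ) : ℂ) := by push_cast; ring
    rw [e1]
    simp only [norm_mul]
    simp only [Complex.norm_cpow_eq_rpow_re_of_pos ht0,
      Complex.norm_cpow_eq_rpow_re_of_pos ht1', Complex.norm_exp]
    have hre : (-(p:ℂ) / t - q / ((1 - t : ℝ) : ℂ)).re = -p / t - q / (1 - t) := by
      rw [show -(p:ℂ) / t - q / ((1 - t : ℝ) : ℂ) = (((-p / t - q / (1 - t) : ℝ)) : ℂ) by
        push_cast; ring]
      exact Complex.ofReal_re _
    rw [hre]
    have hexp : Real.exp (-p / t - q / (1 - t)) ≤ 1 := by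
      rw [Real.exp_le_one_iff]
      have h3 : 0 ≤ p / t := by positivity
      have h4 : 0 ≤ q / (1 - t) := by positivity
      have h5 : -p / t = -(p / t) := neg_div t p
      linarith
    have hpow : t ^ ((b + n - 1).re) ≤ t ^ ((b - 1).re) := by
      apply Real.rpow_le_rpow_of_exponent_ge ht0 ht1.le
      simp only [Complex.add_re, Complex.sub_re, Complex.natCast_re, Complex.one_re]
      linarith [Nat.cast_nonneg (α := ℝ) n]
    calc t ^ ((b + n - 1).re) * (1 - t) ^ ((c - b - 1).re) *
          Real.exp (-p / t - q / (1 - t))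
        ≤ t ^ ((b - 1).re) * (1 - t) ^ ((c - b - 1).re) * 1 := by
          gcongr
      _ = t ^ ((b - 1).re) * (1 - t) ^ ((c - b - 1).re) := by ring
  · exact (Complex.betaIntegral_convergent hb h2).norm

/-- Term-by-term differentiation of an exponential-type series with bounded coefficients. -/
lemma hasDerivAt_series (a : ℕ → ℂ) (C : ℝ) (hC : ∀ n, ‖a n‖ ≤ C) (z : ℂ) :
    HasDerivAt (fun w : ℂ => ∑' n : ℕ, a n * w ^ n / n.factorial)
      (∑' n : ℕ, a (n + 1) * z ^ n / n.factorial) z := by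
  have hC0 : (0:ℝ) ≤ C := le_trans (norm_nonneg _) (hC 0)
  have hzR : z ∈ Metric.ball (0:ℂ) (‖z‖ + 1) := by
    rw [Metric.mem_ball, dist_zero_right]; linarith
  have hu : Summable (fun n : ℕ => C * ((n : ℝ) * (‖z‖ + 1) ^ (n - 1)) / n.factorial) := by
    rw [← summable_nat_add_iff 1]
    have he : (fun n : ℕ => C * (((n+1 : ℕ) : ℝ) * (‖z‖ + 1) ^ (n + 1 - 1)) / (n+1).factorial)
        = fun n : ℕ => C * ((‖z‖ + 1) ^ n / n.factorial) := by
      funext n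
      have hf : ((n + 1).factorial : ℝ) = ((n:ℝ) + 1) * n.factorial := by
        rw [Nat.factorial_succ]; push_cast; ring
      have h1 : ((n:ℝ) + 1) ≠ 0 := by positivity
      have h2 : ((n.factorial : ℝ)) ≠ 0 := Nat.cast_ne_zero.mpr n.factorial_ne_zero
      rw [Nat.add_sub_cancel, hf]
      push_cast
      field_simp
    rw [he]
    exact (Real.summable_pow_div_factorial _).mul_left C
  have hg : ∀ (n : ℕ) (w : ℂ), w ∈ Metric.ball (0:ℂ) (‖z‖ + 1) →
      HasDerivAt (fun w : ℂ => a n * w ^ n / n.factorial)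
        (a n * ((n : ℂ) * w ^ (n - 1)) / n.factorial) w := fun n w _ =>
    ((hasDerivAt_pow n w).const_mul (a n)).div_const _
  have hg' : ∀ (n : ℕ) (w : ℂ), w ∈ Metric.ball (0:ℂ) (‖z‖ + 1) →
      ‖a n * ((n : ℂ) * w ^ (n - 1)) / n.factorial‖
        ≤ C * ((n : ℝ) * (‖z‖ + 1) ^ (n - 1)) / n.factorial := by
    intro n w hw
    rw [Metric.mem_ball, dist_zero_right] at hw
    simp only [norm_div, norm_mul, norm_pow, Complex.norm_natCast]
    gcongr
    exact hC n
  have hg0 : Summable fun n : ℕ => a n * z ^ n / n.factorial := by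
    apply Summable.of_norm_bounded
      ((Real.summable_pow_div_factorial ‖z‖).mul_left C)
    intro n
    simp only [norm_div, norm_mul, norm_pow, Complex.norm_natCast]
    rw [mul_div_assoc]
    gcongr
    exact hC n
  have key := hasDerivAt_tsum_of_isPreconnected hu Metric.isOpen_ball
    (convex_ball (0:ℂ) (‖z‖ + 1)).isPreconnected hg hg' hzR hg0 hzR
  have hsg' : Summable fun n : ℕ => a n * ((n : ℂ) * z ^ (n - 1)) / n.factorial :=
    Summable.of_norm_bounded hu (fun n => hg' n z hzR)
  have heq : (∑' n : ℕ, a n * ((n : ℂ) * z ^ (n - 1)) / n.factorial)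
      = ∑' n : ℕ, a (n + 1) * z ^ n / n.factorial := by
    rw [Summable.tsum_eq_zero_add hsg']
    simp only [Nat.cast_zero, zero_mul, mul_zero, zero_div, zero_add, Nat.add_sub_cancel]
    refine tsum_congr fun n => ?_
    have hf : (((n + 1).factorial : ℂ)) = ((n:ℂ) + 1) * n.factorial := by
      rw [Nat.factorial_succ]; push_cast; ring
    have h1 : ((n:ℂ) + 1) ≠ 0 := by
      have : ((n:ℂ) + 1) = ((n+1 : ℕ) : ℂ) := by push_cast; ring
      rw [this]
      exact Nat.cast_ne_zero.mpr (Nat.succ_ne_zero n)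
    have h2 : ((n.factorial : ℂ)) ≠ 0 := Nat.cast_ne_zero.mpr n.factorial_ne_zero
    rw [hf]
    push_cast
    field_simp
  exact heq ▸ key

/-- One-step differentiation formula for `Phi`. -/
lemma Phi_hasDerivAt (p q : ℝ) (hp : 0 ≤ p) (hq : 0 ≤ q) (b c : ℂ)
    (hb : 0 < b.re) (hcb : b.re < c.re) (z : ℂ) :
    HasDerivAt (fun w => Phi p q b c w) (b / c * Phi p q (b + 1) (c + 1) z) z := by
  have h2 : 0 < (c - b).re := by simp [Complex.sub_re]; linarith
  have hc : 0 < c.re := lt_trans hb hcb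
  have hb0 : b ≠ 0 := ne_zero_of_re_pos' hb
  have hc0 : c ≠ 0 := ne_zero_of_re_pos' hc
  set B := Complex.betaIntegral b (c - b) with hBdef
  set B' := Complex.betaIntegral (b + 1) (c - b) with hB'def
  have hG1 := Complex.Gamma_mul_Gamma_eq_betaIntegral hb h2
  rw [show b + (c - b) = c by ring] at hG1
  have hGb : Complex.Gamma b ≠ 0 := Complex.Gamma_ne_zero_of_re_pos hb
  have hGcb : Complex.Gamma (c - b) ≠ 0 := Complex.Gamma_ne_zero_of_re_pos h2
  have hGc : Complex.Gamma c ≠ 0 := Complex.Gamma_ne_zero_of_re_pos hc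
  have hBne : B ≠ 0 := by
    intro h
    rw [← hBdef, h, mul_zero] at hG1
    exact mul_ne_zero hGb hGcb hG1
  have hb1 : 0 < (b + 1).re := by simp [Complex.add_re]; linarith
  have hG2 := Complex.Gamma_mul_Gamma_eq_betaIntegral hb1 h2
  rw [show b + 1 + (c - b) = c + 1 by ring, Complex.Gamma_add_one b hb0,
    Complex.Gamma_add_one c hc0] at hG2
  have hrel : c * B' = b * B := by
    apply mul_left_cancel₀ hGc
    rw [← hBdef, ← hB'def] at *
    linear_combination b * hG1 - hG2
  have hBrel : B' = b * B / c := by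
    rw [eq_div_iff hc0]
    linear_combination hrel
  have hCb : ∀ n : ℕ, ‖extBeta p q (b + n) (c - b) / B‖ ≤
      |∫ t in (0:ℝ)..1, ‖(t:ℂ) ^ (b - 1) * ((1:ℂ) - t) ^ (c - b - 1)‖| / ‖B‖ := fun n => by
    rw [norm_div]
    exact (div_le_div_iff_of_pos_right (norm_pos_iff.mpr hBne)).mpr
      (extBeta_norm_le p q hp hq b c hb hcb n)
  have hder := hasDerivAt_series (fun n => extBeta p q (b + n) (c - b) / B) _ hCb z
  have hval : b / c * Phi p q (b + 1) (c + 1) z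
      = ∑' n : ℕ, extBeta p q (b + ((n + 1 : ℕ) : ℂ)) (c - b) / B * z ^ n / n.factorial := by
    rw [Phi, show c + 1 - (b + 1) = c - b by ring, ← hB'def, ← tsum_mul_left]
    refine tsum_congr fun k => ?_
    rw [show b + ((k + 1 : ℕ) : ℂ) = b + 1 + (k : ℂ) by push_cast; ring, hBrel]
    have hk : ((k.factorial : ℂ)) ≠ 0 := Nat.cast_ne_zero.mpr k.factorial_ne_zero
    field_simp
  rw [hval]
  exact hder

theorem Phi_deriv (p q : ℝ) (hp : 0 ≤ p) (hq : 0 ≤ q) (b c : ℂ)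
    (hb : 0 < b.re) (hcb : b.re < c.re) (n : ℕ) (z : ℂ) :
    iteratedDeriv n (fun w => Phi p q b c w) z =
      poch b n / poch c n * Phi p q (b + n) (c + n) z := by
  induction n generalizing z with
  | zero => simp [poch]
  | succ n ih =>
    have hfun : iteratedDeriv n (fun w => Phi p q b c w)
        = fun w => poch b n / poch c n * Phi p q (b + n) (c + n) w := funext fun w => ih w
    rw [iteratedDeriv_succ, hfun]
    have hbn : 0 < (b + (n : ℂ)).re := by
      simp only [Complex.add_re, Complex.natCast_re]; positivity
    have hcbn : (b + (n : ℂ)).re < (c + (n : ℂ)).re := by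
      simp only [Complex.add_re, Complex.natCast_re]; linarith
    have hD := Phi_hasDerivAt p q hp hq (b + n) (c + n) hbn hcbn z
    rw [(hD.const_mul (poch b n / poch c n)).deriv]
    rw [show b + (n : ℂ) + 1 = b + ((n + 1 : ℕ) : ℂ) by push_cast; ring,
      show c + (n : ℂ) + 1 = c + ((n + 1 : ℕ) : ℂ) by push_cast; ring]
    have hpc : poch c n ≠ 0 := poch_ne_zero (lt_trans hb hcb) n
    have hcn : (c + (n : ℂ)) ≠ 0 := ne_zero_of_re_pos' (by
      simp only [Complex.add_re, Complex.natCast_re]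
      have := lt_trans hb hcb
      positivity)
    simp only [poch, ascPochhammer_succ_eval] at hpc ⊢
    field_simp
end

section
/- For real p, q ≥ 0, Re(c) > Re(b) > 0, and real x with |x| < 1, the (p,q)-Gauss hypergeometric series F_{p,q}(a,b;c;x) = Σ_{n≥0} [B_{p,q}(b+n, c−b)/B(b, c−b)] (a)_n xⁿ/n! admits the integral representation F_{p,q}(a,b;c;x) = (1/B(b, c−b)) ∫₀¹ t^{b−1} (1−t)^{c−b−1} (1−xt)^{−a} exp(−p/t − q/(1−t)) dt. -/
open MeasureTheory

/-- The (p,q)-extended Gauss hypergeometric function, defined by its series. -/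
noncomputable def Fpq (p q a b c x : ℂ) : ℂ :=
  ∑' n : ℕ, extBeta p q (b + n) (c - b) / Complex.betaIntegral b (c - b) *
    poch a n * x ^ n / n.factorial

/-!
Expand `(1 - x t)^(-a) = ∑ (a)_n (x t)^n / n!` by the binomial series. Since `p, q ≥ 0`, the factor
`exp (-p/t - q/(1-t))` has modulus at most `1` on `[0, 1]`, so the beta kernel
`t^(b-1) (1-t)^(c-b-1) exp (-p/t - q/(1-t))` is integrable, and the series of integrals of norms is
dominated by `‖kernel‖₁ · ∑ |(a)_n| |x|^n / n!`, which converges for `|x| < 1`. Integrating term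
by term, the `n`-th moment of the kernel is `B_{p,q}(b + n, c - b)`.
-/

theorem Ring.choose_add_natCast_sub_one {R : Type*} [Field R] [CharZero R] (r : R) (n : ℕ) :
    Ring.choose (r + n - 1) n = (ascPochhammer R n).eval r / n.factorial := by
  rw [Ring.choose_eq_smul, Polynomial.descPochhammer_smeval_eq_ascPochhammer,
    Polynomial.ascPochhammer_smeval_eq_eval, smul_eq_mul, inv_mul_eq_div]
  ring_nf

theorem mem_eball_zero_one_of_norm_lt_one {E : Type*} [SeminormedAddCommGroup E] {z : E}
    (hz : ‖z‖ < 1) : z ∈ Metric.eball (0 : E) 1 := by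
  rw [← ENNReal.ofReal_one, Metric.eball_ofReal]
  simpa using hz

theorem Complex.hasFPowerSeriesOnBall_one_sub_cpow_neg (a : ℂ) :
    HasFPowerSeriesOnBall (fun z ↦ (1 - z) ^ (-a))
      (.ofScalars ℂ fun n ↦ poch a n / n.factorial) 0 1 := by
  simpa [Complex.cpow_neg, Ring.choose_add_natCast_sub_one, poch] using
    Complex.one_div_one_sub_cpow_hasFPowerSeriesOnBall_zero a

theorem ofScalars_poch_div_factorial_apply (a z : ℂ) (n : ℕ) :
    FormalMultilinearSeries.ofScalars ℂ (fun n ↦ poch a n / n.factorial) n (fun _ ↦ z)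
      = poch a n * z ^ n / n.factorial := by
  rw [FormalMultilinearSeries.ofScalars_apply_eq, smul_eq_mul]
  ring

theorem hasSum_poch_mul_pow_div_factorial (a : ℂ) {z : ℂ} (hz : ‖z‖ < 1) :
    HasSum (fun n ↦ poch a n * z ^ n / n.factorial) ((1 - z) ^ (-a)) := by
  have h := (Complex.hasFPowerSeriesOnBall_one_sub_cpow_neg a).hasSum
    (mem_eball_zero_one_of_norm_lt_one hz)
  simpa only [ofScalars_poch_div_factorial_apply, zero_add] using h

theorem summable_norm_poch_mul_pow_div_factorial (a : ℂ) {z : ℂ} (hz : ‖z‖ < 1) :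
    Summable (fun n ↦ ‖poch a n * z ^ n / n.factorial‖) := by
  have h := FormalMultilinearSeries.summable_norm_apply _ <| Metric.eball_subset_eball
    (Complex.hasFPowerSeriesOnBall_one_sub_cpow_neg a).r_le (mem_eball_zero_one_of_norm_lt_one hz)
  simpa only [ofScalars_poch_div_factorial_apply] using h

theorem hasSum_intervalIntegral_mul_one_sub_mul_cpow_neg {w : ℝ → ℂ}
    (hw : IntervalIntegrable w volume 0 1) (a : ℂ) {x : ℂ} (hx : ‖x‖ < 1) :
    HasSum (fun n : ℕ ↦ (∫ t in (0:ℝ)..1, w t * (t:ℂ) ^ n) * (poch a n * x ^ n / n.factorial))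
      (∫ t in (0:ℝ)..1, w t * (1 - x * t) ^ (-a)) := by
  set c : ℕ → ℂ := fun n ↦ poch a n * x ^ n / n.factorial
  have hw' : IntegrableOn w (Set.Ioc 0 1) :=
    (intervalIntegrable_iff_integrableOn_Ioc_of_le zero_le_one).mp hw
  have hint (n : ℕ) : IntegrableOn (fun t : ℝ ↦ w t * (t:ℂ) ^ n * c n) (Set.Ioc 0 1) :=
    ((intervalIntegrable_iff_integrableOn_Ioc_of_le zero_le_one).mp
      (hw.mul_continuousOn (by fun_prop))).mul_const (c n)
  have hnorm (n : ℕ) : ∫ t in Set.Ioc 0 1, ‖w t * (t:ℂ) ^ n * c n‖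
      ≤ (∫ t in Set.Ioc 0 1, ‖w t‖) * ‖c n‖ := by
    rw [← integral_mul_const]
    refine setIntegral_mono_on (hint n).norm (hw'.norm.mul_const _) measurableSet_Ioc
      fun t ht ↦ ?_
    rw [norm_mul, norm_mul, norm_pow, Complex.norm_real, Real.norm_of_nonneg ht.1.le]
    gcongr ?_ * _
    exact mul_le_of_le_one_right (norm_nonneg _) (pow_le_one₀ ht.1.le ht.2)
  have hsummable : Summable fun n ↦ ∫ t in Set.Ioc 0 1, ‖w t * (t:ℂ) ^ n * c n‖ :=
    .of_nonneg_of_le (fun n ↦ integral_nonneg fun _ ↦ norm_nonneg _) hnorm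
      ((summable_norm_poch_mul_pow_div_factorial a hx).mul_left _)
  have hpoint : ∀ t ∈ Set.Ioc (0:ℝ) 1,
      ∑' n, w t * (t:ℂ) ^ n * c n = w t * (1 - x * t) ^ (-a) := by
    intro t ht
    have hxt : ‖x * t‖ < 1 := by
      rw [norm_mul, Complex.norm_real, Real.norm_of_nonneg ht.1.le]
      exact (mul_le_of_le_one_right (norm_nonneg x) ht.2).trans_lt hx
    rw [← (hasSum_poch_mul_pow_div_factorial a hxt).mul_left (w t) |>.tsum_eq]
    exact tsum_congr fun n ↦ by ring
  simp only [intervalIntegral.integral_of_le zero_le_one, ← integral_mul_const,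
    ← setIntegral_congr_fun measurableSet_Ioc hpoint]
  exact hasSum_integral_of_summable_integral_norm hint hsummable

theorem norm_cexp_neg_div_sub_div_le_one {p q : ℝ} (hp : 0 ≤ p) (hq : 0 ≤ q) {t : ℝ}
    (ht₀ : 0 ≤ t) (ht₁ : t ≤ 1) :
    ‖Complex.exp (-p / t - q / (1 - t))‖ ≤ 1 := by
  rw [Complex.norm_exp, Real.exp_le_one_iff]
  have h₁ : 0 ≤ p / t := div_nonneg hp ht₀
  have h₂ : 0 ≤ q / (1 - t) := div_nonneg hq (sub_nonneg.mpr ht₁)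
  norm_cast
  rw [neg_div]
  linarith

theorem intervalIntegrable_extBeta_integrand {p q : ℝ} (hp : 0 ≤ p) (hq : 0 ≤ q) {x y : ℂ}
    (hx : 0 < x.re) (hy : 0 < y.re) :
    IntervalIntegrable (fun t : ℝ ↦ (t:ℂ) ^ (x - 1) * (1 - t) ^ (y - 1) *
      Complex.exp (-p / t - q / (1 - t))) volume 0 1 := by
  have hbeta := (intervalIntegrable_iff_integrableOn_Ioc_of_le zero_le_one).mp
    (Complex.betaIntegral_convergent hx hy)
  rw [intervalIntegrable_iff_integrableOn_Ioc_of_le zero_le_one]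
  refine hbeta.mul_bdd (c := 1) (by fun_prop) ?_
  rw [ae_restrict_iff' measurableSet_Ioc]
  exact .of_forall fun t ht ↦ norm_cexp_neg_div_sub_div_le_one hp hq ht.1.le ht.2

theorem extBeta_add_natCast (p q x y : ℂ) (n : ℕ) :
    extBeta p q (x + n) y = ∫ t in (0:ℝ)..1, (t:ℂ) ^ (x - 1) * (1 - t) ^ (y - 1) *
      Complex.exp (-p / t - q / (1 - t)) * (t:ℂ) ^ n := by
  refine intervalIntegral.integral_congr_ae (.of_forall fun t ht ↦ ?_)
  rw [Set.uIoc_of_le zero_le_one] at ht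
  rw [add_sub_right_comm, Complex.cpow_add _ _ (by exact_mod_cast ht.1.ne'),
    Complex.cpow_natCast]
  ring

theorem Fpq_integral_rep (p q : ℝ) (hp : 0 ≤ p) (hq : 0 ≤ q) (a b c : ℂ)
    (hb : 0 < b.re) (hcb : b.re < c.re) (x : ℝ) (hx : |x| < 1) :
    Fpq p q a b c x = (Complex.betaIntegral b (c - b))⁻¹ *
      ∫ t in (0:ℝ)..1, (t:ℂ) ^ (b - 1) * ((1:ℂ) - t) ^ (c - b - 1) *
        ((1:ℂ) - x * t) ^ (-a) * Complex.exp (-p / t - q / (1 - t)) := by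
  have hw := intervalIntegrable_extBeta_integrand hp hq hb
    (show 0 < (c - b).re by rw [Complex.sub_re]; linarith)
  have hsum := hasSum_intervalIntegral_mul_one_sub_mul_cpow_neg hw a
    (x := x) (by rwa [Complex.norm_real, Real.norm_eq_abs])
  simp only [← extBeta_add_natCast] at hsum
  rw [Fpq]
  convert (hsum.mul_left (Complex.betaIntegral b (c - b))⁻¹).tsum_eq using 1
  · exact tsum_congr fun n ↦ by ring
  · exact congrArg _ (intervalIntegral.integral_congr fun t _ ↦ mul_right_comm _ _ _)
end
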